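/- arXiv:1904.00563 — 5 statements merged into one kernel-verified Lean document; each statement's English description precedes it below -/
import Mathlib

section
/- Let k be a positive integer and G = G[X,Y] a bipartite graph with maximum average degree Mad(G) ≤ 2k. If every vertex x ∈ X has degree at least k+1, then G admits a proper orientation with maximum indegree at most k+1, i.e., the proper orientation number of G is at most k+1. -/
/-- An orientation of a simple graph: a relation choosing exactly one
direction for each edge, and nothing else. -/
def IsOrientation {V : Type*} (G : SimpleGraph V) (o : V → V → Prop) : Prop :=
  (∀ u v, G.Adj u v ↔ (o u v ∨ o v u)) ∧ (∀ u v, o u v → ¬ o v u)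

/-- Indegree of a vertex in an orientation. -/
noncomputable def inDeg {V : Type*} (o : V → V → Prop) (v : V) : ℕ :=
  {u | o u v}.ncard

/-- A proper orientation: adjacent vertices get distinct indegrees. -/
def IsProper {V : Type*} (G : SimpleGraph V) (o : V → V → Prop) : Prop :=
  ∀ u v, G.Adj u v → inDeg o u ≠ inDeg o v

/-- `MadLE G m` : the maximum average degree of `G` is at most `m`, i.e. every
finite nonempty subgraph `H` satisfies `2|E(H)| ≤ m·|V(H)|`.  The set of ordered
adjacent pairs inside `S` has cardinality `2|E(H)|` for the induced subgraph. -/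
def MadLE {V : Type*} (G : SimpleGraph V) (m : ℕ) : Prop :=
  ∀ S : Set V, S.Finite → S.Nonempty →
    {p : V × V | p.1 ∈ S ∧ p.2 ∈ S ∧ G.Adj p.1 p.2}.ncard ≤ m * S.ncard


lemma exists_orientation_indeg_le {V : Type*} [Fintype V] (G : SimpleGraph V) (k : ℕ)
    (hk : 0 < k) (hmad : MadLE G (2 * k)) :
    ∃ o : V → V → Prop, IsOrientation G o ∧ ∀ v, inDeg o v ≤ k := by
  classical
  letI : LinearOrder V := IsWellOrder.linearOrder WellOrderingRel
  set P : Finset (V × V) := Finset.univ.filter (fun p => G.Adj p.1 p.2 ∧ p.1 < p.2) with hP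
  have hPmem : ∀ p : V × V, p ∈ P ↔ G.Adj p.1 p.2 ∧ p.1 < p.2 := by
    intro p; simp [hP]
  set t : {p // p ∈ P} → Finset (V × Fin k) :=
    fun e => ({e.1.1, e.1.2} : Finset V) ×ˢ Finset.univ with ht
  have hall : ∀ s : Finset {p // p ∈ P}, s.card ≤ (s.biUnion t).card := by
    intro s
    rcases s.eq_empty_or_nonempty with rfl | hs
    · simp
    set S : Finset V := s.biUnion (fun e => ({e.1.1, e.1.2} : Finset V)) with hS
    have hB : s.biUnion t = S ×ˢ (Finset.univ : Finset (Fin k)) := by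
      ext x
      simp only [ht, hS, Finset.mem_biUnion, Finset.mem_product, Finset.mem_univ, and_true]
    have hSne : S.Nonempty := by
      obtain ⟨e, he⟩ := hs
      exact ⟨e.1.1, Finset.mem_biUnion.2 ⟨e, he, by simp⟩⟩
    set A : Finset (V × V) :=
      Finset.univ.filter (fun p : V × V => p.1 ∈ S ∧ p.2 ∈ S ∧ G.Adj p.1 p.2) with hA
    have hmemS : ∀ e ∈ s, (e : {p // p ∈ P}).1.1 ∈ S ∧ e.1.2 ∈ S := by
      intro e he
      constructor <;> exact Finset.mem_biUnion.2 ⟨e, he, by simp⟩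
    have hs1 : s.image (fun e : {p // p ∈ P} => e.1) ⊆ A := by
      intro p hp
      obtain ⟨e, he, rfl⟩ := Finset.mem_image.1 hp
      have := hmemS e he
      have hadj := (hPmem e.1).1 e.2
      simp [hA, this.1, this.2, hadj.1]
    have hs2 : s.image (fun e : {p // p ∈ P} => e.1.swap) ⊆ A := by
      intro p hp
      obtain ⟨e, he, rfl⟩ := Finset.mem_image.1 hp
      have := hmemS e he
      have hadj := (hPmem e.1).1 e.2
      simp [hA, this.1, this.2, hadj.1.symm]
    have hc1 : (s.image (fun e : {p // p ∈ P} => e.1)).card = s.card :=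
      Finset.card_image_of_injective _ Subtype.val_injective
    have hc2 : (s.image (fun e : {p // p ∈ P} => e.1.swap)).card = s.card :=
      Finset.card_image_of_injective _ (Prod.swap_injective.comp Subtype.val_injective)
    have hdisj12 : Disjoint (s.image (fun e : {p // p ∈ P} => e.1))
        (s.image (fun e : {p // p ∈ P} => e.1.swap)) := by
      rw [Finset.disjoint_left]
      intro p hp1 hp2
      obtain ⟨e, he, rfl⟩ := Finset.mem_image.1 hp1
      obtain ⟨e', _, he'⟩ := Finset.mem_image.1 hp2
      have h1 : e.1.1 < e.1.2 := ((hPmem e.1).1 e.2).2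
      have h2 : e'.1.1 < e'.1.2 := ((hPmem e'.1).1 e'.2).2
      have : e'.1.2 = e.1.1 ∧ e'.1.1 = e.1.2 := by
        have := he'
        rw [Prod.ext_iff] at this
        exact ⟨this.1, this.2⟩
      rw [this.1, this.2] at h2
      exact absurd h2 (lt_asymm h1)
    have h2s : 2 * s.card ≤ A.card := by
      have := Finset.card_union_of_disjoint hdisj12
      have hle := Finset.card_le_card (Finset.union_subset hs1 hs2)
      omega
    have hAmad : A.card ≤ 2 * k * S.card := by
      have := hmad (↑S) S.finite_toSet (Finset.coe_nonempty.mpr hSne)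
      have hAeq : {p : V × V | p.1 ∈ (↑S : Set V) ∧ p.2 ∈ (↑S : Set V) ∧ G.Adj p.1 p.2}
          = (↑A : Set (V × V)) := by
        ext p; simp [hA]
      rw [hAeq, Set.ncard_coe_finset, Set.ncard_coe_finset] at this
      exact this
    have : s.card ≤ k * S.card := by nlinarith
    rw [hB, Finset.card_product]
    simpa [mul_comm] using this
  obtain ⟨f, hfinj, hft⟩ := (Finset.all_card_le_biUnion_card_iff_exists_injective t).1 hall
  have hfmem : ∀ e : {p // p ∈ P}, (f e).1 = e.1.1 ∨ (f e).1 = e.1.2 := by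
    intro e
    have := hft e
    simp only [ht, Finset.mem_product, Finset.mem_insert, Finset.mem_singleton] at this
    exact this.1
  set o : V → V → Prop := fun a b =>
    (∃ h : (a, b) ∈ P, (f ⟨(a, b), h⟩).1 = b) ∨ (∃ h : (b, a) ∈ P, (f ⟨(b, a), h⟩).1 = b)
    with ho
  have hOAdj : ∀ a b, o a b → G.Adj a b := by
    rintro a b (⟨h, -⟩ | ⟨h, -⟩)
    · exact ((hPmem _).1 h).1
    · exact ((hPmem _).1 h).1.symm
  have hnotboth : ∀ a b, (a, b) ∈ P → (b, a) ∈ P → False := by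
    intro a b h1 h2
    exact absurd ((hPmem _).1 h2).2 (lt_asymm ((hPmem _).1 h1).2)
  refine ⟨o, ⟨fun a b => ?_, fun a b => ?_⟩, fun v => ?_⟩
  · constructor
    · intro hadj
      rcases lt_or_gt_of_ne hadj.ne with hlt | hlt
      · have hmem : (a, b) ∈ P := (hPmem _).2 ⟨hadj, hlt⟩
        rcases hfmem ⟨(a, b), hmem⟩ with h | h
        · exact Or.inr (Or.inr ⟨hmem, h⟩)
        · exact Or.inl (Or.inl ⟨hmem, h⟩)
      · have hmem : (b, a) ∈ P := (hPmem _).2 ⟨hadj.symm, hlt⟩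
        rcases hfmem ⟨(b, a), hmem⟩ with h | h
        · exact Or.inl (Or.inr ⟨hmem, h⟩)
        · exact Or.inr (Or.inl ⟨hmem, h⟩)
    · rintro (h | h)
      · exact hOAdj a b h
      · exact (hOAdj b a h).symm
  · rintro (⟨h1, hv1⟩ | ⟨h1, hv1⟩) (⟨h2, hv2⟩ | ⟨h2, hv2⟩)
    · exact hnotboth a b h1 h2
    · exact (((hPmem _).1 h1).1.ne) (hv2.symm.trans hv1)
    · exact (((hPmem _).1 h1).1.ne.symm) (hv2.symm.trans hv1)
    · exact hnotboth a b h2 h1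
  · haveI : Nonempty (Fin k) := ⟨⟨0, hk⟩⟩
    set g : V → Fin k := fun u =>
      if h : (u, v) ∈ P then (f ⟨(u, v), h⟩).2
      else if h2 : (v, u) ∈ P then (f ⟨(v, u), h2⟩).2 else Classical.arbitrary _
      with hg
    have hkey : ∀ u, o u v → ∃ e : {p // p ∈ P},
        (e.1 = (u, v) ∨ e.1 = (v, u)) ∧ (f e).1 = v ∧ g u = (f e).2 := by
      rintro u (⟨h, hv⟩ | ⟨h, hv⟩)
      · exact ⟨⟨(u, v), h⟩, Or.inl rfl, hv, by simp [hg, h]⟩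
      · have hnot : (u, v) ∉ P := fun h' => hnotboth u v h' h
        exact ⟨⟨(v, u), h⟩, Or.inr rfl, hv, by simp [hg, hnot, h]⟩
    have hinj : Set.InjOn g {u | o u v} := by
      intro u hu u' hu' hgu
      obtain ⟨e, he, hfv, hge⟩ := hkey u hu
      obtain ⟨e', he', hfv', hge'⟩ := hkey u' hu'
      have hne : u ≠ v := (hOAdj u v hu).ne
      have hne' : u' ≠ v := (hOAdj u' v hu').ne
      have hfe : f e = f e' := by
        have : (f e).2 = (f e').2 := by rw [← hge, ← hge', hgu]
        exact Prod.ext (hfv.trans hfv'.symm) this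
      have hee : e.1 = e'.1 := congrArg Subtype.val (hfinj hfe)
      rcases he with h | h <;> rcases he' with h' | h' <;>
        rw [h, h'] at hee <;> rw [Prod.ext_iff] at hee
      · exact hee.1
      · exact absurd hee.1 hne
      · exact absurd hee.2 hne
      · exact hee.2
    calc inDeg o v ≤ (Set.univ : Set (Fin k)).ncard :=
          Set.ncard_le_ncard_of_injOn g (fun a _ => Set.mem_univ _) hinj (Set.finite_univ)
      _ = k := by simp [Set.ncard_univ]

/-- Theorem 2: a bipartite graph `G[X,Y]` with `Mad(G) ≤ 2k` in which every
vertex of `X` has degree at least `k+1` has a proper `(k+1)`-orientation. -/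
theorem proper_orientation_of_mad {V : Type*} [Fintype V] (G : SimpleGraph V)
    (X Y : Set V) (hdisj : Disjoint X Y) (hcover : X ∪ Y = Set.univ)
    (hbip : ∀ u v, G.Adj u v → (u ∈ X ∧ v ∈ Y) ∨ (u ∈ Y ∧ v ∈ X))
    (k : ℕ) (hk : 0 < k) (hmad : MadLE G (2 * k))
    (hdeg : ∀ x ∈ X, k + 1 ≤ (G.neighborSet x).ncard) :
    ∃ o : V → V → Prop, IsOrientation G o ∧ IsProper G o ∧
      ∀ v, inDeg o v ≤ k + 1 := by
  classical
  obtain ⟨o0, ⟨hadj_iff, hanti⟩, hind⟩ := exists_orientation_indeg_le G k hk hmad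
  have hXX : ∀ u v, u ∈ X → v ∈ X → ¬ G.Adj u v := by
    intro u v hu hv hadj
    rcases hbip u v hadj with ⟨-, hvY⟩ | ⟨huY, -⟩
    · exact Set.disjoint_left.mp hdisj hv hvY
    · exact Set.disjoint_left.mp hdisj hu huY
  -- out-degree bound for vertices in X
  have hout : ∀ x ∈ X, k + 1 - inDeg o0 x ≤ {u | o0 x u}.ncard := by
    intro x hx
    have hsplit : G.neighborSet x = {u | o0 x u} ∪ {u | o0 u x} := by
      ext u
      simp only [SimpleGraph.mem_neighborSet, Set.mem_union, Set.mem_setOf_eq]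
      exact hadj_iff x u
    have hdisj0 : Disjoint {u | o0 x u} {u | o0 u x} := by
      rw [Set.disjoint_left]
      exact fun u h1 h2 => hanti x u h1 h2
    have hcard : (G.neighborSet x).ncard = {u | o0 x u}.ncard + {u | o0 u x}.ncard := by
      rw [hsplit]; exact Set.ncard_union_eq hdisj0 (Set.toFinite _) (Set.toFinite _)
    have h1 := hdeg x hx
    have h2 : inDeg o0 x = {u | o0 u x}.ncard := rfl
    omega
  have hTex : ∀ x : V, ∃ T : Set V, T ⊆ {u | o0 x u} ∧
      (x ∈ X → T.ncard = k + 1 - inDeg o0 x) := by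
    intro x
    by_cases hx : x ∈ X
    · obtain ⟨T, hT1, hT2⟩ := Set.exists_subset_card_eq (hout x hx)
      exact ⟨T, hT1, fun _ => hT2⟩
    · exact ⟨∅, Set.empty_subset _, fun h => absurd h hx⟩
  choose T hTsub hTcard using hTex
  have hTout : ∀ x u, u ∈ T x → o0 x u := fun x u h => hTsub x h
  set o : V → V → Prop := fun a b =>
    (o0 a b ∧ ¬(a ∈ X ∧ b ∈ T a)) ∨ (o0 b a ∧ b ∈ X ∧ a ∈ T b) with ho
  have hOAdj : ∀ a b, o a b → G.Adj a b := by
    rintro a b (⟨h, -⟩ | ⟨h, -⟩)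
    · exact (hadj_iff a b).2 (Or.inl h)
    · exact ((hadj_iff b a).2 (Or.inl h)).symm
  -- indegree in X
  have hinX : ∀ x ∈ X, inDeg o x = k + 1 := by
    intro x hx
    have hset : {u | o u x} = {u | o0 u x} ∪ T x := by
      ext u
      simp only [Set.mem_setOf_eq, Set.mem_union, ho]
      constructor
      · rintro (⟨h, -⟩ | ⟨-, -, h⟩)
        · exact Or.inl h
        · exact Or.inr h
      · rintro (h | h)
        · refine Or.inl ⟨h, fun ⟨huX, hxT⟩ => ?_⟩
          exact hXX u x huX hx ((hadj_iff u x).2 (Or.inl (hTout u x hxT)))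
        · exact Or.inr ⟨hTout x u h, hx, h⟩
    have hd : Disjoint {u | o0 u x} (T x) := by
      rw [Set.disjoint_left]
      exact fun u h1 h2 => hanti x u (hTout x u h2) h1
    have : inDeg o x = inDeg o0 x + (T x).ncard := by
      show {u | o u x}.ncard = _
      rw [hset]
      exact Set.ncard_union_eq hd (Set.toFinite _) (Set.toFinite _)
    rw [this, hTcard x hx]
    have := hind x
    omega
  -- indegree in Y
  have hinY : ∀ y ∈ Y, inDeg o y ≤ k := by
    intro y hy
    have hsub : {u | o u y} ⊆ {u | o0 u y} := by
      rintro u (⟨h, -⟩ | ⟨-, hyX, -⟩)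
      · exact h
      · exact absurd hyX (Set.disjoint_right.mp hdisj hy)
    exact le_trans (Set.ncard_le_ncard hsub (Set.toFinite _)) (hind y)
  refine ⟨o, ⟨fun a b => ?_, fun a b => ?_⟩, fun u v hadj => ?_, fun v => ?_⟩
  · constructor
    · intro hadj
      rcases (hadj_iff a b).1 hadj with h | h
      · by_cases hf : a ∈ X ∧ b ∈ T a
        · exact Or.inr (Or.inr ⟨h, hf.1, hf.2⟩)
        · exact Or.inl (Or.inl ⟨h, hf⟩)
      · by_cases hf : b ∈ X ∧ a ∈ T b
        · exact Or.inl (Or.inr ⟨h, hf.1, hf.2⟩)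
        · exact Or.inr (Or.inl ⟨h, hf⟩)
    · rintro (h | h)
      · exact hOAdj a b h
      · exact (hOAdj b a h).symm
  · rintro (⟨h1, hn1⟩ | ⟨h1, hb1, ht1⟩) (⟨h2, hn2⟩ | ⟨h2, hb2, ht2⟩)
    · exact hanti a b h1 h2
    · exact hn1 ⟨hb2, ht2⟩
    · exact hn2 ⟨hb1, ht1⟩
    · exact hanti b a h1 h2
  · rcases hbip u v hadj with ⟨huX, hvY⟩ | ⟨huY, hvX⟩
    · have := hinX u huX; have := hinY v hvY; omega
    · have := hinX v hvX; have := hinY u huY; omega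
  · have hv : v ∈ X ∪ Y := hcover ▸ Set.mem_univ v
    rcases hv with hv | hv
    · exact le_of_eq (hinX v hv)
    · exact le_trans (hinY v hv) (Nat.le_succ k)
end

section
/- Let G be a bipartite graph with bipartition (X,Y), and suppose G has an orientation with maximum indegree at most k and every vertex of X has degree at least k+1 in G. Then by reversing some edges incident to vertices of X one obtains an orientation in which every vertex of X has indegree exactly k+1 and every vertex of Y has indegree at most k; in particular this orientation is proper. -/
/-!
Enlarge the in-neighbourhood of each `x ∈ X` to a set `S x` of exactly `k + 1` neighbours and
reorient the edges at `x` so that `S x` becomes exactly its in-neighbourhood; this is consistent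
because `X` is independent. No `y ∈ Y` gains an in-neighbour: `x → y` in the new orientation means
`y ∉ S x`, so `y` was not an in-neighbour of `x` and the edge already pointed to `y`.
-/

section

variable {V : Type*} {G : SimpleGraph V} {X : Set V} {S : V → Set V} {o : V → V → Prop}

theorem IsOrientation.adj (ho : IsOrientation G o) {u v : V} (h : o u v) : G.Adj u v :=
  (ho.1 u v).2 (Or.inl h)

open Classical in
def reorientAt (G : SimpleGraph V) (X : Set V) (S : V → Set V) (o : V → V → Prop) :
    V → V → Prop :=
  fun u v => if v ∈ X then G.Adj u v ∧ u ∈ S v else if u ∈ X then G.Adj u v ∧ v ∉ S u else o u v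

theorem reorientAt_iff_of_notMem {u v : V} (hu : u ∉ X) (hv : v ∉ X) :
    reorientAt G X S o u v ↔ o u v := by
  simp only [reorientAt, if_neg hu, if_neg hv]

theorem IsOrientation.reorientAt (ho : IsOrientation G o) (hX : G.IsIndepSet X) :
    IsOrientation G (reorientAt G X S o) := by
  have hXX : ∀ {u v}, G.Adj u v → u ∈ X → v ∉ X := fun huv hu hv =>
    hX hu hv (G.ne_of_adj huv) huv
  refine ⟨fun u v => ?_, fun u v => ?_⟩
  · by_cases hu : u ∈ X <;> by_cases hv : v ∈ X <;>
      simp only [_root_.reorientAt, hu, hv, if_true, if_false, G.adj_comm v u]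
    · exact ⟨fun h => absurd hv (hXX h hu), fun h => h.elim And.left And.left⟩
    · tauto
    · tauto
    · exact ho.1 u v
  · by_cases hu : u ∈ X <;> by_cases hv : v ∈ X <;>
      simp only [_root_.reorientAt, hu, hv, if_true, if_false]
    · exact fun h => absurd hv (hXX h.1 hu)
    · tauto
    · tauto
    · exact ho.2 u v

theorem inDeg_reorientAt_of_mem (hS : ∀ x ∈ X, S x ⊆ G.neighborSet x) {x : V} (hx : x ∈ X) :
    inDeg (reorientAt G X S o) x = (S x).ncard := by
  have hin : {u | reorientAt G X S o u x} = S x := by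
    ext u
    simp only [reorientAt, if_pos hx, Set.mem_ofPred_eq, and_iff_right_iff_imp]
    exact fun hu => (hS x hx hu).symm
  rw [inDeg, hin]

theorem inDeg_reorientAt_le [Finite V] (ho : IsOrientation G o)
    (hS : ∀ x ∈ X, {u | o u x} ⊆ S x) {y : V} (hy : y ∉ X) :
    inDeg (reorientAt G X S o) y ≤ inDeg o y := by
  refine Set.ncard_le_ncard (fun u hu => ?_) (Set.toFinite _)
  simp only [reorientAt, if_neg hy, Set.mem_ofPred_eq] at hu ⊢
  split_ifs at hu with huX
  · exact ((ho.1 u y).1 hu.1).resolve_right fun hyu => hu.2 (hS u huX hyu)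
  · exact hu

theorem isProper_of_inDeg_eq_of_inDeg_le {Y : Set V} {k : ℕ}
    (hbip : ∀ u v, G.Adj u v → (u ∈ X ∧ v ∈ Y) ∨ (u ∈ Y ∧ v ∈ X))
    (hX : ∀ x ∈ X, inDeg o x = k + 1) (hY : ∀ y ∈ Y, inDeg o y ≤ k) : IsProper G o := by
  intro u v huv
  rcases hbip u v huv with ⟨hu, hv⟩ | ⟨hu, hv⟩
  · have := hY v hv; rw [hX u hu]; omega
  · have := hY u hu; rw [hX v hv]; omega

end

theorem switch_orientation_general {V : Type*} [Fintype V] (G : SimpleGraph V)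
    (X Y : Set V) (hdisj : Disjoint X Y)
    (hbip : ∀ u v, G.Adj u v → (u ∈ X ∧ v ∈ Y) ∨ (u ∈ Y ∧ v ∈ X))
    (k : ℕ) (o : V → V → Prop) (ho : IsOrientation G o)
    (hind : ∀ v, inDeg o v ≤ k)
    (hdeg : ∀ x ∈ X, k + 1 ≤ (G.neighborSet x).ncard) :
    ∃ o' : V → V → Prop, IsOrientation G o' ∧
      (∀ u v, (¬ (o u v ↔ o' u v)) → u ∈ X ∨ v ∈ X) ∧
      (∀ x ∈ X, inDeg o' x = k + 1) ∧
      (∀ y ∈ Y, inDeg o' y ≤ k) ∧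
      IsProper G o' := by
  have hXindep : G.IsIndepSet X := fun u hu v hv _ huv => by
    rcases hbip u v huv with ⟨-, hvY⟩ | ⟨huY, -⟩
    exacts [Set.disjoint_left.1 hdisj hv hvY, Set.disjoint_left.1 hdisj hu huY]
  have hin : ∀ x, {u | o u x} ⊆ G.neighborSet x := fun x _ hu => (ho.adj hu).symm
  choose! S hinS hSN hcard using fun x (hx : x ∈ X) =>
    Set.exists_subsuperset_card_eq (hin x) ((hind x).trans k.le_succ) (hdeg x hx)
  have hX : ∀ x ∈ X, inDeg (reorientAt G X S o) x = k + 1 := fun x hx =>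
    (inDeg_reorientAt_of_mem hSN hx).trans (hcard x hx)
  have hY : ∀ y ∈ Y, inDeg (reorientAt G X S o) y ≤ k := fun y hy =>
    (inDeg_reorientAt_le ho hinS (Set.disjoint_right.1 hdisj hy)).trans (hind y)
  refine ⟨reorientAt G X S o, ho.reorientAt hXindep, fun u v h => ?_, hX, hY,
    isProper_of_inDeg_eq_of_inDeg_le hbip hX hY⟩
  by_contra! hne
  exact h (reorientAt_iff_of_notMem hne.1 hne.2).symm

/-- From a `k`-orientation of a bipartite graph whose `X`-side has all degrees
at least `k+1`, reversing edges incident to `X` yields an orientation where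
every `x ∈ X` has indegree exactly `k+1`, every `y ∈ Y` has indegree at most
`k`; in particular it is proper. -/
theorem switch_orientation {V : Type*} [Fintype V] (G : SimpleGraph V)
    (X Y : Set V) (hdisj : Disjoint X Y) (hcover : X ∪ Y = Set.univ)
    (hbip : ∀ u v, G.Adj u v → (u ∈ X ∧ v ∈ Y) ∨ (u ∈ Y ∧ v ∈ X))
    (k : ℕ) (o : V → V → Prop) (ho : IsOrientation G o)
    (hind : ∀ v, inDeg o v ≤ k)
    (hdeg : ∀ x ∈ X, k + 1 ≤ (G.neighborSet x).ncard) :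
    ∃ o' : V → V → Prop, IsOrientation G o' ∧
      (∀ u v, (¬ (o u v ↔ o' u v)) → u ∈ X ∨ v ∈ X) ∧
      (∀ x ∈ X, inDeg o' x = k + 1) ∧
      (∀ y ∈ Y, inDeg o' y ≤ k) ∧
      IsProper G o' :=
  switch_orientation_general G X Y hdisj hbip k o ho hind hdeg
end

section
/- The 3-dimensional hypercube graph Q₃ has proper orientation number exactly 2: it admits a proper orientation with maximum indegree 2, and admits no proper orientation with maximum indegree at most 1. -/
/-- The 3-dimensional hypercube graph: vertices are `Fin 3 → Bool`, adjacent
iff they differ in exactly one coordinate. -/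
def cubeGraph : SimpleGraph (Fin 3 → Bool) :=
  SimpleGraph.fromRel (fun u v => {i | u i ≠ v i}.ncard = 1)

/-!
In a proper orientation with all indegrees at most `1`, the indegrees `0, 1` alternate along any
4-cycle, so two opposite vertices of the cycle are sources; a common neighbour of two sources has
indegree at least `2`. Hence no graph containing a 4-cycle, in particular not `Q₃`, has such an
orientation. Conversely, orienting the edges of `Q₃` in direction `0` from odd to even vertices
and all other edges from even to odd gives every even vertex indegree `1` and every odd vertex
indegree `2`, which is proper because `Q₃` is bipartite by parity.
-/

open Finset

section Indegree

variable {V : Type*} {o : V → V → Prop}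

lemma inDeg_eq_card_filter [Fintype V] [DecidableRel o] (v : V) :
    inDeg o v = #{u | o u v} := by
  rw [inDeg, Set.ncard_eq_toFinset_card']
  simp

variable [Finite V]

lemma not_rel_of_inDeg_eq_zero {u v : V} (hv : inDeg o v = 0) : ¬ o u v := fun huv => by
  rw [inDeg, Set.ncard_eq_zero] at hv
  exact hv.subset huv

lemma two_le_inDeg {u w v : V} (huw : u ≠ w) (hu : o u v) (hw : o w v) : 2 ≤ inDeg o v :=
  (Set.one_lt_ncard).mpr ⟨u, hu, w, hw, huw⟩

lemma IsOrientation.rel_of_inDeg_eq_zero {G : SimpleGraph V} (ho : IsOrientation G o) {u v : V}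
    (hu : inDeg o u = 0) (huv : G.Adj u v) : o u v :=
  ((ho.1 u v).mp huv).resolve_right (not_rel_of_inDeg_eq_zero hu)

lemma IsOrientation.two_le_inDeg_of_adj_sources {G : SimpleGraph V} (ho : IsOrientation G o)
    {a b c : V} (hac : a ≠ c) (hab : G.Adj a b) (hcb : G.Adj c b)
    (ha : inDeg o a = 0) (hc : inDeg o c = 0) : 2 ≤ inDeg o b :=
  two_le_inDeg hac (ho.rel_of_inDeg_eq_zero ha hab) (ho.rel_of_inDeg_eq_zero hc hcb)

theorem not_isProper_of_inDeg_le_one_of_four_cycle {G : SimpleGraph V} (ho : IsOrientation G o)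
    (hle : ∀ v, inDeg o v ≤ 1) {a b c d : V} (hac : a ≠ c) (hbd : b ≠ d)
    (hab : G.Adj a b) (hbc : G.Adj b c) (hcd : G.Adj c d) (hda : G.Adj d a) :
    ¬ IsProper G o := by
  intro hp
  have := hp a b hab; have := hp b c hbc; have := hp c d hcd; have := hp d a hda
  have := hle a; have := hle b; have := hle c; have := hle d
  have sources : (inDeg o a = 0 ∧ inDeg o c = 0) ∨ (inDeg o b = 0 ∧ inDeg o d = 0) := by omega
  rcases sources with ⟨ha, hc⟩ | ⟨hb, hd⟩
  · have := ho.two_le_inDeg_of_adj_sources hac hab hbc.symm ha hc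
    omega
  · have := ho.two_le_inDeg_of_adj_sources hbd hbc hcd.symm hb hd
    omega

end Indegree

lemma cubeGraph_adj_iff (u v : Fin 3 → Bool) : cubeGraph.Adj u v ↔ #{i | u i ≠ v i} = 1 := by
  have hsymm : #{i | v i ≠ u i} = #{i | u i ≠ v i} := by simp only [ne_comm]
  have hne : #{i | u i ≠ v i} = 1 → u ≠ v := by
    rintro h rfl
    simp at h
  simp only [cubeGraph, SimpleGraph.fromRel_adj, Set.ncard_eq_toFinset_card', Set.toFinset_ofPred,
    hsymm, or_self]
  exact ⟨And.right, fun h => ⟨hne h, h⟩⟩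

instance : DecidableRel cubeGraph.Adj := fun u v => decidable_of_iff _ (cubeGraph_adj_iff u v).symm

def cubeParity (v : Fin 3 → Bool) : Bool := xor (v 0) (xor (v 1) (v 2))

def cubeOrientation (u v : Fin 3 → Bool) : Prop :=
  cubeGraph.Adj u v ∧ (u 0 ≠ v 0 ↔ cubeParity u = true)

instance : DecidableRel cubeOrientation := fun u v => by
  unfold cubeOrientation; infer_instance

lemma cubeParity_of_adj {u v : Fin 3 → Bool} :
    cubeGraph.Adj u v → cubeParity v = !cubeParity u := by
  revert u v; decide

lemma isOrientation_cubeOrientation : IsOrientation cubeGraph cubeOrientation := by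
  refine ⟨fun u v => ⟨fun huv => ?_, ?_⟩, fun u v huv hvu => ?_⟩
  · simp only [cubeOrientation, huv, huv.symm, true_and, cubeParity_of_adj huv, ne_comm (a := v 0)]
    cases cubeParity u <;> simp <;> tauto
  · rintro (h | h)
    exacts [h.1, h.1.symm]
  · simp only [cubeOrientation, cubeParity_of_adj huv.1, ne_comm (a := v 0)] at huv hvu
    cases cubeParity u <;> simp_all

lemma inDeg_cubeOrientation (v : Fin 3 → Bool) :
    inDeg cubeOrientation v = if cubeParity v then 2 else 1 := by
  rw [inDeg_eq_card_filter]
  revert v; decide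

lemma isProper_cubeOrientation : IsProper cubeGraph cubeOrientation := fun u v huv => by
  rw [inDeg_cubeOrientation, inDeg_cubeOrientation, cubeParity_of_adj huv]
  cases cubeParity u <;> simp

lemma inDeg_cubeOrientation_le_two (v : Fin 3 → Bool) : inDeg cubeOrientation v ≤ 2 := by
  rw [inDeg_cubeOrientation]
  split <;> omega

/-- `Q₃` has proper orientation number exactly `2`: it has a proper
`2`-orientation but no proper `1`-orientation. -/
theorem cube_proper_orientation_number :
    (∃ o, IsOrientation cubeGraph o ∧ IsProper cubeGraph o ∧
      ∀ v, inDeg o v ≤ 2) ∧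
    ¬ ∃ o, IsOrientation cubeGraph o ∧ IsProper cubeGraph o ∧
      ∀ v, inDeg o v ≤ 1 := by
  refine ⟨⟨cubeOrientation, isOrientation_cubeOrientation, isProper_cubeOrientation,
    inDeg_cubeOrientation_le_two⟩, ?_⟩
  rintro ⟨o, ho, hp, hle⟩
  exact not_isProper_of_inDeg_le_one_of_four_cycle ho hle
    (a := ![false, false, false]) (b := ![true, false, false])
    (c := ![true, true, false]) (d := ![false, true, false])
    (by decide) (by decide) (by decide) (by decide) (by decide) (by decide) hp
end

section
/- Let σ be an orientation with maximum indegree at most 3 of a graph containing vertices b, c and seven vertices a₁,…,a₇ each adjacent exactly to b and c (within this subgraph). Then some aₖ has indegree 2 within this subgraph; consequently, in any proper 3-orientation of a graph containing this configuration, neither b nor c can have indegree 2. -/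
/-!
Proof idea: if no `aₖ` had indegree 2, then every `aₖ` would send an arc to `b` or to `c`,
so the seven `aₖ` would contribute at least seven to `inDeg b + inDeg c ≤ 6`.
An `aₖ` of indegree 2 is adjacent to both `b` and `c`, so properness forbids indegree 2 there.
-/

namespace IsOrientation

variable {V : Type*} {G : SimpleGraph V} {o : V → V → Prop}

theorem adj_of_arc (ho : IsOrientation G o) {u v : V} (h : o u v) : G.Adj u v :=
  (ho.1 u v).2 (Or.inl h)

theorem inDeg_eq_ncard_neighborSet_of_sink (ho : IsOrientation G o) {v : V}
    (hsink : ∀ u, ¬ o v u) : inDeg o v = (G.neighborSet v).ncard := by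
  rw [inDeg]
  congr 1
  ext u
  simp only [Set.mem_ofPred_eq, SimpleGraph.mem_neighborSet, ho.1 v u, hsink u, false_or]

theorem exists_arc_of_inDeg_ne_ncard (ho : IsOrientation G o) {v : V}
    (h : inDeg o v ≠ (G.neighborSet v).ncard) : ∃ u ∈ G.neighborSet v, o v u := by
  by_contra! hsink
  exact h (ho.inDeg_eq_ncard_neighborSet_of_sink fun u hu => hsink u (ho.adj_of_arc hu) hu)

theorem card_le_inDeg_add_inDeg [Finite V] {ι : Type*} [Fintype ι] {a : ι → V}
    (ha : Function.Injective a) {b c : V} (harc : ∀ k, o (a k) b ∨ o (a k) c) :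
    Fintype.card ι ≤ inDeg o b + inDeg o c :=
  calc Fintype.card ι = (Set.range a).ncard := by
        rw [← Set.image_univ, Set.ncard_image_of_injective _ ha, Set.ncard_univ,
          Nat.card_eq_fintype_card]
    _ ≤ ({u | o u b} ∪ {u | o u c}).ncard :=
        Set.ncard_le_ncard (Set.range_subset_iff.2 harc) (Set.toFinite _)
    _ ≤ inDeg o b + inDeg o c := Set.ncard_union_le _ _

theorem exists_inDeg_eq_two [Finite V] (ho : IsOrientation G o) {b c : V} (hbc : b ≠ c)
    {ι : Type*} [Fintype ι] {a : ι → V} (ha : Function.Injective a)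
    (hnbr : ∀ k, G.neighborSet (a k) = {b, c})
    (hlt : inDeg o b + inDeg o c < Fintype.card ι) : ∃ k, inDeg o (a k) = 2 := by
  by_contra! hne
  have harc : ∀ k, o (a k) b ∨ o (a k) c := fun k => by
    obtain ⟨u, hu, hku⟩ :=
      ho.exists_arc_of_inDeg_ne_ncard (by rw [hnbr k, Set.ncard_pair hbc]; exact hne k)
    rw [hnbr k] at hu
    rcases hu with rfl | rfl
    exacts [Or.inl hku, Or.inr hku]
  exact absurd (card_le_inDeg_add_inDeg ha harc) (not_le.2 hlt)

end IsOrientation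

/-- If a graph contains vertices `b ≠ c` and seven vertices `a k` whose
neighborhoods are exactly `{b, c}`, then any orientation with maximum indegree
at most `3` gives some `a k` indegree `2`; consequently, if the orientation is
proper, neither `b` nor `c` has indegree `2`. -/
theorem k27_gadget {V : Type*} [Fintype V] (G : SimpleGraph V)
    (b c : V) (hbc : b ≠ c) (a : Fin 7 → V) (ha : Function.Injective a)
    (hnbr : ∀ k, G.neighborSet (a k) = {b, c})
    (o : V → V → Prop) (ho : IsOrientation G o) (hind : ∀ v, inDeg o v ≤ 3) :
    (∃ k, inDeg o (a k) = 2) ∧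
    (IsProper G o → inDeg o b ≠ 2 ∧ inDeg o c ≠ 2) := by
  obtain ⟨k, hk⟩ := ho.exists_inDeg_eq_two hbc ha hnbr <| by
    have := hind b; have := hind c; simp only [Fintype.card_fin]; omega
  have hnbr_k : b ∈ G.neighborSet (a k) ∧ c ∈ G.neighborSet (a k) := by simp [hnbr k]
  refine ⟨⟨k, hk⟩, fun hp => ⟨fun hb => ?_, fun hc => ?_⟩⟩
  · exact hp _ _ hnbr_k.1 (hk.trans hb.symm)
  · exact hp _ _ hnbr_k.2 (hk.trans hc.symm)
end

section
/- Every tree admits a proper orientation with maximum indegree at most 4, i.e., the proper orientation number of any tree is at most 4. -/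
section AuxPO

variable {V : Type*}

/-- number of children of `u` (w.r.t. parent map `par`, root `r`) oriented "up" by `f`. -/
noncomputable def cntA (par : V → V) (r : V) (f : V → Bool) (u : V) : ℕ :=
  {w | par w = u ∧ w ≠ r ∧ f w = true}.ncard

open Classical in
/-- effective indegree within the subtree rooted at `v`, with root slack `s`. -/
noncomputable def effA (par : V → V) (r v : V) (f : V → Bool) (s : ℕ) (u : V) : ℕ :=
  cntA par r f u + (if u = v then s else if f u = true then 0 else 1)

/-- `u` is a descendant of `v`. -/
def descA (par : V → V) (u v : V) : Prop := ∃ n : ℕ, par^[n] u = v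

/-- there is an orientation of the subtree rooted at `v` realizing effective root
value `a` with slack `s`, all effective indegrees at most 4, properly. -/
def QA (par : V → V) (r v : V) (a s : ℕ) : Prop :=
  ∃ f : V → Bool,
    (∀ u, descA par u v → effA par r v f s u ≤ 4) ∧
    effA par r v f s v = a ∧
    (∀ u w, descA par u v → par w = u → w ≠ r → effA par r v f s w ≠ effA par r v f s u)

def InvA (par : V → V) (r v : V) : Prop :=
  QA par r v 0 0 ∧
  (QA par r v 1 1 ∨ QA par r v 2 1 ∨
    ∃ b₁ b₂ : ℕ, b₁ ≠ b₂ ∧ QA par r v b₁ 1 ∧ QA par r v b₂ 1)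

variable {par : V → V} {r : V} {pl : V → ℕ}

lemma iterate_par_r (hr : par r = r) (n : ℕ) : par^[n] r = r := by
  induction n with
  | zero => rfl
  | succ n ih => rw [Function.iterate_succ_apply, hr, ih]

lemma descA_self (u : V) : descA par u u := ⟨0, rfl⟩

lemma descA_of_par {u v w : V} (hw : par w = u) (h : descA par u v) : descA par w v := by
  obtain ⟨n, hn⟩ := h
  exact ⟨n + 1, by rw [Function.iterate_succ_apply, hw, hn]⟩

lemma eq_r_of_descA_r (hr : par r = r) {c : V} (h : descA par r c) : c = r := by
  obtain ⟨n, hn⟩ := h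
  rw [iterate_par_r hr] at hn
  exact hn.symm

lemma pl_le_of_descA (hr : par r = r) (hpl : ∀ v, v ≠ r → pl (par v) < pl v)
    {c : V} (hc : c ≠ r) {u : V} (h : descA par u c) : pl c ≤ pl u := by
  obtain ⟨n, hn⟩ := h
  induction n generalizing u with
  | zero => exact hn ▸ le_rfl
  | succ n ih =>
    rcases eq_or_ne u r with rfl | hur
    · exact absurd (eq_r_of_descA_r hr ⟨n + 1, hn⟩) hc
    · rw [Function.iterate_succ_apply] at hn
      exact le_trans (ih hn) (le_of_lt (hpl u hur))

lemma ne_r_of_descA (hr : par r = r) {c u : V} (hc : c ≠ r) (h : descA par u c) : u ≠ r := by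
  rintro rfl
  exact hc (eq_r_of_descA_r hr h)

lemma descA_parent {u c : V} (h : descA par u c) (hne : u ≠ c) : descA par (par u) c := by
  obtain ⟨n, hn⟩ := h
  cases n with
  | zero => exact absurd hn hne
  | succ n => exact ⟨n, by rw [← Function.iterate_succ_apply]; exact hn⟩

lemma not_descA_of_child (hr : par r = r) (hpl : ∀ v, v ≠ r → pl (par v) < pl v)
    {c v : V} (hc : par c = v) (hcr : c ≠ r) : ¬ descA par v c := by
  intro h
  have h1 : pl c ≤ pl v := pl_le_of_descA hr hpl hcr h
  have h2 : pl v < pl c := hc ▸ hpl c hcr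
  omega

lemma child_eq (hr : par r = r) (hpl : ∀ v, v ≠ r → pl (par v) < pl v)
    {v c c' : V} (hc : par c = v) (hcr : c ≠ r) (hc' : par c' = v) (hcr' : c' ≠ r)
    {u : V} (h : descA par u c) (h' : descA par u c') : c = c' := by
  have key : ∀ n u, pl u = n → descA par u c → descA par u c' → c = c' := by
    intro n
    induction n using Nat.strong_induction_on with
    | _ n ih =>
      intro u hu hdc hdc'
      rcases eq_or_ne u c with rfl | huc
      · rcases eq_or_ne u c' with rfl | huc'
        · rfl
        · have : descA par v c' := hc ▸ descA_parent hdc' huc'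
          exact absurd this (not_descA_of_child hr hpl hc' hcr')
      · rcases eq_or_ne u c' with rfl | huc'
        · have : descA par v c := hc' ▸ descA_parent hdc huc
          exact absurd this (not_descA_of_child hr hpl hc hcr)
        · have hur : u ≠ r := ne_r_of_descA hr hcr hdc
          exact ih (pl (par u)) (hu ▸ hpl u hur) (par u) rfl
            (descA_parent hdc huc) (descA_parent hdc' huc')
  exact key (pl u) u rfl h h'

lemma descA_cases (hr : par r = r) {u v : V} (h : descA par u v) :
    u = v ∨ ∃ c, par c = v ∧ c ≠ r ∧ descA par u c := by
  obtain ⟨n, hn⟩ := h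
  induction n generalizing v with
  | zero => exact Or.inl hn
  | succ n ih =>
    rw [Function.iterate_succ_apply'] at hn
    rcases eq_or_ne (par^[n] u) r with hx | hx
    · have hvr : v = r := by rw [← hn, hx, hr]
      subst hvr
      exact ih (by rw [hx])
    · exact Or.inr ⟨par^[n] u, hn, hx, ⟨n, rfl⟩⟩

lemma descA_total (hr : par r = r) (hpl : ∀ v, v ≠ r → pl (par v) < pl v)
    (u : V) : descA par u r := by
  have key : ∀ n u, pl u = n → descA par u r := by
    intro n
    induction n using Nat.strong_induction_on with
    | _ n ih =>
      intro u hu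
      rcases eq_or_ne u r with rfl | hur
      · exact descA_self _
      · obtain ⟨m, hm⟩ := ih (pl (par u)) (hu ▸ hpl u hur) (par u) rfl
        exact ⟨m + 1, by rw [Function.iterate_succ_apply, hm]⟩
  exact key (pl u) u rfl

open Classical in
lemma glueA (hr : par r = r) (hpl : ∀ v, v ≠ r → pl (par v) < pl v)
    (v : V) (U : Set V) (hU : ∀ c ∈ U, par c = v ∧ c ≠ r) (S A : ℕ) (hA4 : A ≤ 4)
    (hcard : U.ncard + S = A)
    (hsel : ∀ c, par c = v ∧ c ≠ r →
      ∃ a, a ≠ A ∧ QA par r c a (if c ∈ U then 0 else 1)) :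
    QA par r v A S := by
  classical
  have hsel' : ∀ c, ∃ (fc : V → Bool) (a : ℕ), (par c = v ∧ c ≠ r) →
      (a ≠ A ∧
       (∀ u, descA par u c → effA par r c fc (if c ∈ U then 0 else 1) u ≤ 4) ∧
       effA par r c fc (if c ∈ U then 0 else 1) c = a ∧
       (∀ u w, descA par u c → par w = u → w ≠ r →
         effA par r c fc (if c ∈ U then 0 else 1) w ≠
           effA par r c fc (if c ∈ U then 0 else 1) u)) := by
    intro c
    by_cases hc : par c = v ∧ c ≠ r
    · obtain ⟨a, ha, f, h1, h2, h3⟩ := hsel c hc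
      exact ⟨f, a, fun _ => ⟨ha, h1, h2, h3⟩⟩
    · exact ⟨fun _ => false, 0, fun h => absurd h hc⟩
  choose ff aa hff using hsel'
  set F : V → Bool := fun u =>
    if par u = v ∧ u ≠ r then (if u ∈ U then true else false)
    else if h : ∃ c, (par c = v ∧ c ≠ r) ∧ descA par u c then ff h.choose u
    else false with hF
  have hF1 : ∀ c, par c = v ∧ c ≠ r → F c = (if c ∈ U then true else false) := by
    intro c hc
    simp only [hF]
    rw [if_pos hc]
  have hF2 : ∀ c, (par c = v ∧ c ≠ r) → ∀ u, descA par u c → u ≠ c → F u = ff c u := by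
    intro c hc u hd hne
    have hnb : ¬ (par u = v ∧ u ≠ r) := by
      rintro ⟨h1, h2⟩
      exact not_descA_of_child hr hpl hc.1 hc.2 (h1 ▸ descA_parent hd hne)
    have hex : ∃ c', (par c' = v ∧ c' ≠ r) ∧ descA par u c' := ⟨c, hc, hd⟩
    simp only [hF]
    rw [if_neg hnb, dif_pos hex]
    have hsp := hex.choose_spec
    rw [child_eq hr hpl hsp.1.1 hsp.1.2 hc.1 hc.2 hsp.2 hd]
  have hcnt : ∀ c, (par c = v ∧ c ≠ r) → ∀ u, descA par u c →
      cntA par r F u = cntA par r (ff c) u := by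
    intro c hc u hd
    unfold cntA
    congr 1
    ext w
    simp only [Set.mem_setOf_eq]
    refine and_congr_right fun h1 => and_congr_right fun h2 => ?_
    have hdw : descA par w c := descA_of_par h1 hd
    have hwc : w ≠ c := by
      rintro rfl
      have huv : u = v := by rw [← h1, hc.1]
      exact not_descA_of_child hr hpl hc.1 hc.2 (huv ▸ hd)
    rw [hF2 c hc w hdw hwc]
  have heff : ∀ c, (hc : par c = v ∧ c ≠ r) → ∀ u, descA par u c →
      effA par r v F S u = effA par r c (ff c) (if c ∈ U then 0 else 1) u := by
    intro c hc u hd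
    have huv : u ≠ v := fun h => not_descA_of_child hr hpl hc.1 hc.2 (h ▸ hd)
    unfold effA
    rw [hcnt c hc u hd, if_neg huv]
    rcases eq_or_ne u c with rfl | huc
    · rw [if_pos rfl, hF1 u hc]
      by_cases hu : u ∈ U
      · simp [hu]
      · simp [hu]
    · rw [if_neg huc, hF2 c hc u hd huc]
  have hv : effA par r v F S v = A := by
    have hset : {w | par w = v ∧ w ≠ r ∧ F w = true} = U := by
      ext w
      simp only [Set.mem_setOf_eq]
      constructor
      · rintro ⟨h1, h2, h3⟩
        rw [hF1 w ⟨h1, h2⟩] at h3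
        by_cases hw : w ∈ U
        · exact hw
        · simp [hw] at h3
      · intro hw
        refine ⟨(hU w hw).1, (hU w hw).2, ?_⟩
        rw [hF1 w (hU w hw)]
        simp [hw]
    unfold effA cntA
    rw [if_pos rfl, hset, hcard]
  refine ⟨F, ?_, hv, ?_⟩
  · intro u hu
    rcases descA_cases hr hu with rfl | ⟨c, hc1, hc2, hdc⟩
    · rw [hv]; exact hA4
    · rw [heff c ⟨hc1, hc2⟩ u hdc]
      exact (hff c ⟨hc1, hc2⟩).2.1 u hdc
  · intro u w hu hw hwr
    rcases descA_cases hr hu with rfl | ⟨c, hc1, hc2, hdc⟩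
    · have hcw : par w = u ∧ w ≠ r := ⟨hw, hwr⟩
      rw [hv, heff w hcw w (descA_self w), (hff w hcw).2.2.1]
      exact (hff w hcw).1
    · have hdw : descA par w c := descA_of_par hw hdc
      rw [heff c ⟨hc1, hc2⟩ u hdc, heff c ⟨hc1, hc2⟩ w hdw]
      exact (hff c ⟨hc1, hc2⟩).2.2.2 u w hdc hw hwr

lemma exists_subset_ncard {α : Type*} (s : Set α) (hs : s.Finite) (k : ℕ)
    (hk : k ≤ s.ncard) : ∃ U : Set α, U ⊆ s ∧ U.ncard = k := by
  classical
  obtain ⟨B, hB, hBcard⟩ := Finset.exists_subset_card_eq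
    (s := hs.toFinset) (n := k) (by rwa [← Set.ncard_eq_toFinset_card s hs])
  exact ⟨↑B, fun x hx => hs.mem_toFinset.1 (hB hx),
    by rw [Set.ncard_coe_finset, hBcard]⟩

lemma dglueA (hr : par r = r) (hpl : ∀ v, v ≠ r → pl (par v) < pl v) (v : V)
    (IH : ∀ c, par c = v → c ≠ r → InvA par r c)
    (A : ℕ) (hA1 : 1 ≤ A) (hA4 : A ≤ 4) (U : Set V) (hU : ∀ c ∈ U, par c = v ∧ c ≠ r)
    (hcard : U.ncard + 1 = A)
    (hdodge : ∀ c, par c = v ∧ c ≠ r → c ∉ U → ∃ a, a ≠ A ∧ QA par r c a 1) :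
    QA par r v A 1 := by
  classical
  apply glueA hr hpl v U hU 1 A hA4 hcard
  intro c hc
  by_cases hcu : c ∈ U
  · refine ⟨0, by omega, ?_⟩
    rw [if_pos hcu]
    exact (IH c hc.1 hc.2).1
  · obtain ⟨a, ha, hq⟩ := hdodge c hc hcu
    exact ⟨a, ha, by rwa [if_neg hcu]⟩

lemma classifyA (c : V) (h : InvA par r c) :
    ∃ t : ℕ, (t = 1 ∨ t = 2) ∧ ∀ A, A ≠ t → ∃ a, a ≠ A ∧ QA par r c a 1 := by
  rcases h.2 with h1 | h2 | ⟨b₁, b₂, hne, hb₁, hb₂⟩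
  · exact ⟨1, Or.inl rfl, fun A hA => ⟨1, fun h => hA h.symm, h1⟩⟩
  · exact ⟨2, Or.inr rfl, fun A hA => ⟨2, fun h => hA h.symm, h2⟩⟩
  · refine ⟨1, Or.inl rfl, fun A hA => ?_⟩
    rcases eq_or_ne b₁ A with rfl | hb
    · exact ⟨b₂, Ne.symm hne, hb₂⟩
    · exact ⟨b₁, hb, hb₁⟩

lemma inv_stepA [Finite V] (hr : par r = r) (hpl : ∀ v, v ≠ r → pl (par v) < pl v)
    (v : V) (IH : ∀ c, par c = v → c ≠ r → InvA par r c) : InvA par r v := by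
  classical
  have hdown : ∀ c, par c = v ∧ c ≠ r → ∃ a, a ≠ 0 ∧ QA par r c a 1 := by
    intro c hc
    have hpos : ∀ a, QA par r c a 1 → a ≠ 0 := by
      intro a ha
      obtain ⟨f, _, he, _⟩ := ha
      unfold effA at he
      rw [if_pos rfl] at he
      omega
    rcases (IH c hc.1 hc.2).2 with h | h | ⟨b₁, b₂, _, hb₁, _⟩
    · exact ⟨1, hpos 1 h, h⟩
    · exact ⟨2, hpos 2 h, h⟩
    · exact ⟨b₁, hpos b₁ hb₁, hb₁⟩
  have part1 : QA par r v 0 0 := by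
    apply glueA hr hpl v ∅ (by simp) 0 0 (by norm_num) (by simp)
    intro c hc
    obtain ⟨a, ha, hq⟩ := hdown c hc
    exact ⟨a, ha, by simpa using hq⟩
  refine ⟨part1, ?_⟩
  have hcl : ∀ c, ∃ t : ℕ, (par c = v ∧ c ≠ r) → ((t = 1 ∨ t = 2) ∧
      ∀ A, A ≠ t → ∃ a, a ≠ A ∧ QA par r c a 1) := by
    intro c
    by_cases hc : par c = v ∧ c ≠ r
    · obtain ⟨t, h1, h2⟩ := classifyA c (IH c hc.1 hc.2)
      exact ⟨t, fun _ => ⟨h1, h2⟩⟩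
    · exact ⟨1, fun h => absurd h hc⟩
  choose t ht using hcl
  by_cases hC0 : ∀ c, ¬ (par c = v ∧ c ≠ r)
  · left
    apply dglueA hr hpl v IH 1 le_rfl (by norm_num) ∅ (by simp) (by simp)
    intro c hc _
    exact absurd hc (hC0 c)
  push_neg at hC0
  obtain ⟨c0, hc0⟩ := hC0
  by_cases hC1 : ∀ c, par c = v ∧ c ≠ r → c = c0
  · by_cases hd : ∃ a, a ≠ 1 ∧ QA par r c0 a 1
    · right; right
      refine ⟨1, 2, by norm_num, ?_, ?_⟩
      · apply dglueA hr hpl v IH 1 le_rfl (by norm_num) ∅ (by simp) (by simp)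
        intro c hc _
        rw [hC1 c hc]
        exact hd
      · apply dglueA hr hpl v IH 2 (by norm_num) (by norm_num) {c0}
          (by simpa using hc0) (by simp)
        intro c hc hcu
        exact absurd (hC1 c hc) (by simpa using hcu)
    · right; left
      apply dglueA hr hpl v IH 2 (by norm_num) (by norm_num) {c0}
        (by simpa using hc0) (by simp)
      intro c hc hcu
      exact absurd (hC1 c hc) (by simpa using hcu)
  push_neg at hC1
  obtain ⟨c1, hc1, hc1ne⟩ := hC1
  have hsub2 : 2 ≤ ({c | par c = v ∧ c ≠ r} : Set V).ncard := by
    have hsub : ({c1, c0} : Set V) ⊆ {c | par c = v ∧ c ≠ r} := by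
      intro x hx
      rcases hx with rfl | hx
      · exact hc1
      · rw [Set.mem_singleton_iff] at hx
        exact hx ▸ hc0
    calc (2 : ℕ) = ({c1, c0} : Set V).ncard := (Set.ncard_pair hc1ne).symm
      _ ≤ _ := Set.ncard_le_ncard hsub (Set.toFinite _)
  obtain ⟨U2, hU2sub, hU2card⟩ := exists_subset_ncard _ (Set.toFinite _) 2 hsub2
  have Q3 : QA par r v 3 1 := by
    apply dglueA hr hpl v IH 3 (by norm_num) (by norm_num) U2
      (fun c hc => hU2sub hc) (by omega)
    intro c hc _
    rcases (ht c hc).1 with h | h <;> exact (ht c hc).2 3 (by omega)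
  right; right
  by_cases hL : ∃ l, (par l = v ∧ l ≠ r) ∧ t l = 1
  · obtain ⟨l, hl, htl⟩ := hL
    by_cases hM : ∃ m1 m2, (par m1 = v ∧ m1 ≠ r) ∧ (par m2 = v ∧ m2 ≠ r) ∧
        t m1 = 2 ∧ t m2 = 2 ∧ m1 ≠ m2
    · obtain ⟨m1, m2, hm1, hm2, htm1, htm2, hmne⟩ := hM
      have hlm1 : l ≠ m1 := by rintro rfl; omega
      have hlm2 : l ≠ m2 := by rintro rfl; omega
      have hsub3 : 3 ≤ ({c | par c = v ∧ c ≠ r} : Set V).ncard := by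
        have hsub : ({l, m1, m2} : Set V) ⊆ {c | par c = v ∧ c ≠ r} := by
          intro x hx
          rcases hx with rfl | hx
          · exact hl
          · rcases hx with rfl | hx
            · exact hm1
            · rw [Set.mem_singleton_iff] at hx
              exact hx ▸ hm2
        have hcard3 : ({l, m1, m2} : Set V).ncard = 3 := by
          rw [Set.ncard_insert_of_notMem (by simp [hlm1, hlm2]) (Set.toFinite _),
            Set.ncard_pair hmne]
        calc (3 : ℕ) = ({l, m1, m2} : Set V).ncard := hcard3.symm
          _ ≤ _ := Set.ncard_le_ncard hsub (Set.toFinite _)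
      obtain ⟨U3, hU3sub, hU3card⟩ := exists_subset_ncard _ (Set.toFinite _) 3 hsub3
      refine ⟨3, 4, by norm_num, Q3, ?_⟩
      apply dglueA hr hpl v IH 4 (by norm_num) le_rfl U3
        (fun c hc => hU3sub hc) (by omega)
      intro c hc _
      rcases (ht c hc).1 with h | h <;> exact (ht c hc).2 4 (by omega)
    · push_neg at hM
      refine ⟨2, 3, by norm_num, ?_, Q3⟩
      by_cases hm : ∃ m, (par m = v ∧ m ≠ r) ∧ t m = 2
      · obtain ⟨m, hmc, htm⟩ := hm
        apply dglueA hr hpl v IH 2 (by norm_num) (by norm_num) {m}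
          (by simpa using hmc) (by simp)
        intro c hc hcu
        have hct : t c ≠ 2 := by
          intro h
          exact (by simpa using hcu : c ≠ m) (hM c m hc hmc h htm)
        refine (ht c hc).2 2 ?_
        rcases (ht c hc).1 with h1 | h1
        · omega
        · exact absurd h1 hct
      · push_neg at hm
        apply dglueA hr hpl v IH 2 (by norm_num) (by norm_num) {c0}
          (by simpa using hc0) (by simp)
        intro c hc _
        refine (ht c hc).2 2 ?_
        rcases (ht c hc).1 with h1 | h1
        · omega
        · exact absurd h1 (hm c hc)
  · push_neg at hL
    refine ⟨1, 3, by norm_num, ?_, Q3⟩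
    apply dglueA hr hpl v IH 1 le_rfl (by norm_num) ∅ (by simp) (by simp)
    intro c hc _
    refine (ht c hc).2 1 ?_
    rcases (ht c hc).1 with h1 | h1
    · exact absurd h1 (hL c hc)
    · omega

lemma inv_allA [Finite V] (hr : par r = r) (hpl : ∀ v, v ≠ r → pl (par v) < pl v)
    (v : V) : InvA par r v := by
  classical
  cases nonempty_fintype V
  set B := Finset.univ.sup pl with hB
  have hple : ∀ u, pl u ≤ B := fun u => Finset.le_sup (Finset.mem_univ u)
  have key : ∀ n v, B - pl v = n → InvA par r v := by
    intro n
    induction n using Nat.strong_induction_on with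
    | _ n ihn =>
      intro v hv
      apply inv_stepA hr hpl v
      intro c hc hcr
      have h1 : pl v < pl c := hc ▸ hpl c hcr
      have h2 : pl c ≤ B := hple c
      exact ihn (B - pl c) (by omega) c rfl
  exact key (B - pl v) v rfl

end AuxPO

open SimpleGraph Walk in
theorem tree_proper_orientation_aux {V : Type*} [Fintype V] (G : SimpleGraph V)
    (htree : G.IsTree) :
    ∃ o : V → V → Prop,
      ((∀ u v, G.Adj u v ↔ (o u v ∨ o v u)) ∧ (∀ u v, o u v → ¬ o v u)) ∧
      (∀ u v, G.Adj u v → {x | o x u}.ncard ≠ {x | o x v}.ncard) ∧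
      ∀ v, {x | o x v}.ncard ≤ 4 := by
  classical
  haveI : Nonempty V := htree.isConnected.nonempty
  obtain ⟨r⟩ := ‹Nonempty V›
  have hup := htree.existsUnique_path
  set P : ∀ v, G.Walk v r := fun v => (hup v r).choose with hPdef
  have hP : ∀ v, (P v).IsPath := fun v => (hup v r).choose_spec.1
  have hPu : ∀ v (q : G.Walk v r), q.IsPath → q = P v :=
    fun v q hq => (hup v r).choose_spec.2 q hq
  set pl : V → ℕ := fun v => (P v).length with hpldef
  set par : V → V := fun v => (P v).getVert 1 with hpardef
  have hPr : P r = Walk.nil := (hPu r Walk.nil Walk.IsPath.nil).symm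
  have hr : par r = r := by
    show (P r).getVert 1 = r
    rw [hPr]
    rfl
  have hstep : ∀ v, v ≠ r → G.Adj v (par v) ∧ pl (par v) + 1 = pl v := by
    intro v hv
    obtain ⟨w, hadj, q, hq⟩ := Walk.exists_eq_cons_of_ne hv (P v)
    have hqp : q.IsPath ∧ v ∉ q.support := by
      have h := hP v
      rw [hq, Walk.cons_isPath_iff] at h
      exact h
    have hpar : par v = w := by
      show (P v).getVert 1 = w
      rw [hq]
      rw [show (1 : ℕ) = 0 + 1 from rfl, Walk.getVert_cons_succ]
      exact Walk.getVert_zero q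
    have hqP : q = P w := hPu w q hqp.1
    refine ⟨hpar ▸ hadj, ?_⟩
    show (P (par v)).length + 1 = (P v).length
    rw [hpar, ← hqP, hq, Walk.length_cons]
  have hpl : ∀ v, v ≠ r → pl (par v) < pl v := fun v hv => by
    have := (hstep v hv).2; omega
  have hadjpar : ∀ v, v ≠ r → G.Adj v (par v) := fun v hv => (hstep v hv).1
  have hclaim : ∀ u v, G.Adj u v → pl v ≤ pl u → par u = v := by
    intro u v hadj hle
    by_cases hu : u ∈ (P v).support
    · exfalso
      have hd : ((P v).dropUntil u hu).IsPath := (hP v).dropUntil hu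
      have hdP : (P v).dropUntil u hu = P u := hPu u _ hd
      have hlen : ((P v).takeUntil u hu).length + ((P v).dropUntil u hu).length
          = pl v := by
        have h := congrArg Walk.length ((P v).take_spec hu)
        rwa [Walk.length_append] at h
      have htl : ((P v).takeUntil u hu).length ≠ 0 := by
        intro h0
        exact hadj.ne (Walk.eq_of_length_eq_zero h0).symm
      have hplu : pl u = ((P v).dropUntil u hu).length := by
        show (P u).length = _
        rw [hdP]
      omega
    · have hcons : (Walk.cons hadj (P v)).IsPath := Walk.IsPath.cons (hP v) hu
      have h := hPu u _ hcons
      show (P u).getVert 1 = v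
      rw [← h]
      rw [show (1 : ℕ) = 0 + 1 from rfl, Walk.getVert_cons_succ]
      exact Walk.getVert_zero (P v)
  have hclass : ∀ u v, G.Adj u v → par u = v ∨ par v = u := by
    intro u v hadj
    rcases le_total (pl v) (pl u) with h | h
    · exact Or.inl (hclaim u v hadj h)
    · exact Or.inr (hclaim v u hadj.symm h)
  have hparne : ∀ u v, G.Adj u v → par u = v → u ≠ r := by
    intro u v hadj h
    rintro rfl
    rw [hr] at h
    subst h
    exact hadj.ne rfl
  obtain ⟨f, hbound, -, hproper⟩ :=
    (inv_allA (par := par) (r := r) (pl := pl) hr hpl r).1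
  have hdt : ∀ u, descA par u r := descA_total hr hpl
  set o : V → V → Prop := fun u w =>
    (u ≠ r ∧ par u = w ∧ f u = true) ∨ (w ≠ r ∧ par w = u ∧ f w = false) with ho
  have hdeg : ∀ u, {x | o x u}.ncard = effA par r r f 0 u := by
    intro u
    unfold effA cntA
    rcases eq_or_ne u r with heq | hur
    · have hset : {w | o w u} = {w | par w = u ∧ w ≠ r ∧ f w = true} := by
        ext w
        simp only [ho, Set.mem_setOf_eq]
        constructor
        · rintro (⟨h1, h2, h3⟩ | ⟨h1, h2, h3⟩)
          · exact ⟨h2, h1, h3⟩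
          · exact absurd heq h1
        · rintro ⟨h1, h2, h3⟩
          exact Or.inl ⟨h2, h1, h3⟩
      rw [hset, if_pos heq, Nat.add_zero]
    · rw [if_neg hur]
      by_cases hf : f u = true
      · have hset : {w | o w u} = {w | par w = u ∧ w ≠ r ∧ f w = true} := by
          ext w
          simp only [ho, Set.mem_setOf_eq]
          constructor
          · rintro (⟨h1, h2, h3⟩ | ⟨h1, h2, h3⟩)
            · exact ⟨h2, h1, h3⟩
            · rw [hf] at h3; exact Bool.noConfusion h3
          · rintro ⟨h1, h2, h3⟩
            exact Or.inl ⟨h2, h1, h3⟩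
        rw [hset, if_pos hf, Nat.add_zero]
      · have hf' : f u = false := by simpa using hf
        have hset : {w | o w u} =
            insert (par u) {w | par w = u ∧ w ≠ r ∧ f w = true} := by
          ext w
          simp only [ho, Set.mem_setOf_eq, Set.mem_insert_iff]
          constructor
          · rintro (⟨h1, h2, h3⟩ | ⟨h1, h2, h3⟩)
            · exact Or.inr ⟨h2, h1, h3⟩
            · exact Or.inl h2.symm
          · rintro (rfl | ⟨h1, h2, h3⟩)
            · exact Or.inr ⟨hur, rfl, hf'⟩
            · exact Or.inl ⟨h2, h1, h3⟩
        have hnm : par u ∉ {w | par w = u ∧ w ≠ r ∧ f w = true} := by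
          rintro ⟨h1, h2, -⟩
          have a1 := hpl u hur
          have a2 := hpl (par u) h2
          rw [h1] at a2
          omega
        rw [hset, Set.ncard_insert_of_notMem hnm (Set.toFinite _), if_neg hf]
  have hoadj : ∀ a b, o a b → G.Adj a b := by
    rintro a b (⟨h1, h2, -⟩ | ⟨h1, h2, -⟩)
    · exact h2 ▸ hadjpar a h1
    · exact (h2 ▸ hadjpar b h1).symm
  refine ⟨o, ⟨?_, ?_⟩, ?_, ?_⟩
  · intro u v
    constructor
    · intro hadj
      rcases hclass u v hadj with h | h
      · have hur : u ≠ r := hparne u v hadj h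
        by_cases hfu : f u = true
        · exact Or.inl (Or.inl ⟨hur, h, hfu⟩)
        · exact Or.inr (Or.inr ⟨hur, h, by simpa using hfu⟩)
      · have hvr : v ≠ r := hparne v u hadj.symm h
        by_cases hfv : f v = true
        · exact Or.inr (Or.inl ⟨hvr, h, hfv⟩)
        · exact Or.inl (Or.inr ⟨hvr, h, by simpa using hfv⟩)
    · rintro (h | h)
      · exact hoadj _ _ h
      · exact (hoadj _ _ h).symm
  · rintro u v (⟨h1, h2, h3⟩ | ⟨h1, h2, h3⟩) (⟨g1, g2, g3⟩ | ⟨g1, g2, g3⟩)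
    · have a1 := hpl u h1
      have a2 := hpl v g1
      rw [h2] at a1
      rw [g2] at a2
      omega
    · rw [h3] at g3
      exact Bool.noConfusion g3
    · rw [g3] at h3
      exact Bool.noConfusion h3
    · have a1 := hpl u g1
      have a2 := hpl v h1
      rw [g2] at a1
      rw [h2] at a2
      omega
  · intro u v hadj
    rw [hdeg u, hdeg v]
    rcases hclass u v hadj with h | h
    · exact hproper v u (hdt v) h (hparne u v hadj h)
    · exact (hproper u v (hdt u) h (hparne v u hadj.symm h)).symm
  · intro v
    rw [hdeg v]
    exact hbound v (hdt v)


/-- Every tree has a proper orientation with all indegrees at most `4`. -/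
theorem tree_proper_orientation {V : Type*} [Fintype V] (G : SimpleGraph V)
    (htree : G.IsTree) :
    ∃ o : V → V → Prop, IsOrientation G o ∧ IsProper G o ∧
      ∀ v, inDeg o v ≤ 4 := by
  obtain ⟨o, h1, h2, h3⟩ := tree_proper_orientation_aux G htree
  exact ⟨o, h1, h2, h3⟩
end
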